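/- For the word w consisting of m copies of the letter 0, the weights are b_0^(w) = 2/3 - 2/(3(3^{2m}+1)) and b_1^(w) = b_2^(w) = 1/6 + 1/(3(3^{2m}+1)). Consequently sum_{j=0}^{2} (b_j^(w) - 1/3)^2 tends to 1/6 as m tends to infinity, and the supremum over all finite words w over {0,1,2} of sum_{j=0}^{2} (b_j^(w) - 1/3)^2 equals 1/6 (and is not attained). -/

import Mathlib

open Matrix BigOperators

/-- The matrix `M_0`. -/
noncomputable def M0 : Matrix (Fin 3) (Fin 3) ℝ :=
  (1 / 15 : ℝ) • !![9, 0, 0; 2, 2, -1; 2, -1, 2]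

/-- The matrix `M_1`. -/
noncomputable def M1 : Matrix (Fin 3) (Fin 3) ℝ :=
  (1 / 15 : ℝ) • !![2, 2, -1; 0, 9, 0; -1, 2, 2]

/-- The matrix `M_2`. -/
noncomputable def M2 : Matrix (Fin 3) (Fin 3) ℝ :=
  (1 / 15 : ℝ) • !![2, -1, 2; -1, 2, 2; 0, 0, 9]

/-- `Mmat i` is the matrix `M_i`. -/
noncomputable def Mmat : Fin 3 → Matrix (Fin 3) (Fin 3) ℝ := ![M0, M1, M2]

/-- For a word `w = [w₁, ..., wₘ]`, `Mword w = M_{w₁} * ⋯ * M_{wₘ}`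
(the empty word giving the identity matrix). -/
noncomputable def Mword (w : List (Fin 3)) : Matrix (Fin 3) (Fin 3) ℝ :=
  (w.map Mmat).prod

/-- The `j`-th column `z_j` of `M_w`, as a vector in `ℝ³`. -/
noncomputable def zcol (w : List (Fin 3)) (j : Fin 3) : Fin 3 → ℝ :=
  fun i => Mword w i j

/-- The vector `z = z₀ + z₁ + z₂`, the sum of the columns of `M_w`. -/
noncomputable def zvec (w : List (Fin 3)) : Fin 3 → ℝ :=
  fun i => ∑ j : Fin 3, Mword w i j

/-- `c_j^(w)`, the `j`-th column sum of `M_w`, i.e. the `j`-th entry of `(1,1,1) M_w`. -/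
noncomputable def cw (w : List (Fin 3)) (j : Fin 3) : ℝ :=
  ∑ i : Fin 3, Mword w i j

/-- `S^(w) = c₀^(w) + c₁^(w) + c₂^(w)`, the sum of all entries of `M_w`. -/
noncomputable def Sw (w : List (Fin 3)) : ℝ :=
  ∑ j : Fin 3, cw w j

/-- The weight `b_j^(w) = 1/6 + c_j^(w) / (2 S^(w))`. -/
noncomputable def bwt (w : List (Fin 3)) (j : Fin 3) : ℝ :=
  1 / 6 + cw w j / (2 * Sw w)

/-!
Column sums evolve by `c(w ++ [a]) = c(w) M_a`. Each `M_a` scales the Lorentzian quadratic form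
`Q(c) = c₀c₁ + c₀c₂ + c₁c₂ = ((∑ cⱼ)² - ∑ cⱼ²) / 2` (`esymm2`) by exactly `1/25` and keeps
`∑ cⱼ` positive on the forward cone `{∑ cⱼ > 0, Q > 0}`; as `c([]) = (1, 1, 1)` lies in that cone,
so does every `c(w)`.
Since `∑ⱼ (b_j - 1/3)² = 1/6 - Q(c) / (2 S²)`, the value `1/6` is never attained. For `w = 0ᵐ` the
column sums are `15⁻ᵐ ((3·9ᵐ - 1)/2, 1, 1)`, so the weights tend to `(2/3, 1/6, 1/6)`, at which the
sum equals `1/6`.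
-/

open Filter Topology

def esymm2 (c : Fin 3 → ℝ) : ℝ :=
  c 0 * c 1 + c 0 * c 2 + c 1 * c 2

lemma sum_sq_weight_sub_third (c : Fin 3 → ℝ) (hc : ∑ i, c i ≠ 0) :
    ∑ j, (1 / 6 + c j / (2 * ∑ i, c i) - 1 / 3) ^ 2 =
      1 / 6 - esymm2 c / (2 * (∑ i, c i) ^ 2) := by
  simp only [Fin.sum_univ_three, esymm2] at hc ⊢
  field_simp
  ring

lemma esymm2_vecMul_Mmat (c : Fin 3 → ℝ) (a : Fin 3) :
    esymm2 (c ᵥ* Mmat a) = esymm2 c / 25 := by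
  fin_cases a <;>
    simp [esymm2, vecMul, dotProduct, Fin.sum_univ_three, Mmat, M0, M1, M2] <;> ring

lemma sum_vecMul_Mmat_pos (c : Fin 3 → ℝ) (a : Fin 3) (hs : 0 < ∑ i, c i)
    (hq : 0 < esymm2 c) : 0 < ∑ i, (c ᵥ* Mmat a) i := by
  rw [Fin.sum_univ_three] at hs
  simp only [esymm2] at hq
  fin_cases a <;>
    simp [vecMul, dotProduct, Fin.sum_univ_three, Mmat, M0, M1, M2] <;>
    nlinarith [sq_nonneg (c 0 - c 1), sq_nonneg (c 0 - c 2), sq_nonneg (c 1 - c 2)]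

lemma cw_nil : cw [] = fun _ => 1 := by
  funext j
  simp [cw, Mword, one_apply]

lemma cw_append (w : List (Fin 3)) (a : Fin 3) : cw (w ++ [a]) = cw w ᵥ* Mmat a := by
  funext j
  simp only [cw, Mword, List.map_append, List.prod_append, List.map_singleton,
    List.prod_singleton, mul_apply, vecMul, dotProduct]
  rw [Finset.sum_comm]
  simp [Finset.sum_mul]

lemma Sw_pos_and_esymm2_cw_pos (w : List (Fin 3)) : 0 < Sw w ∧ 0 < esymm2 (cw w) := by
  induction w using List.reverseRecOn with
  | nil => norm_num [Sw, cw_nil, esymm2]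
  | append_singleton w a ih =>
    rw [Sw, cw_append, esymm2_vecMul_Mmat]
    exact ⟨sum_vecMul_Mmat_pos _ a ih.1 ih.2, by linarith [ih.2]⟩

lemma sum_sq_bwt_sub_third_lt (w : List (Fin 3)) : ∑ j, (bwt w j - 1 / 3) ^ 2 < 1 / 6 := by
  obtain ⟨hS, hq⟩ := Sw_pos_and_esymm2_cw_pos w
  unfold Sw at hS
  simp only [bwt, Sw, sum_sq_weight_sub_third _ hS.ne']
  have : 0 < esymm2 (cw w) / (2 * (∑ i, cw w i) ^ 2) := by positivity
  linarith

lemma cw_replicate_zero (m : ℕ) :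
    cw (List.replicate m 0) = ((15 : ℝ) ^ m)⁻¹ • ![(3 * 9 ^ m - 1) / 2, 1, 1] := by
  induction m with
  | zero =>
    funext j
    fin_cases j <;> norm_num [cw_nil]
  | succ m ih =>
    rw [List.replicate_succ', cw_append, ih]
    funext j
    fin_cases j <;>
      simp [vecMul, dotProduct, Fin.sum_univ_three, Mmat, M0, pow_succ] <;> ring

lemma bwt_replicate_zero (m : ℕ) :
    bwt (List.replicate m 0) 0 = 2 / 3 - 2 / (3 * ((3 : ℝ) ^ (2 * m) + 1)) ∧
    bwt (List.replicate m 0) 1 = 1 / 6 + 1 / (3 * ((3 : ℝ) ^ (2 * m) + 1)) ∧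
    bwt (List.replicate m 0) 2 = 1 / 6 + 1 / (3 * ((3 : ℝ) ^ (2 * m) + 1)) := by
  have h9 : (3 : ℝ) ^ (2 * m) = 9 ^ m := by rw [pow_mul]; norm_num
  simp only [bwt, Sw, cw_replicate_zero, Fin.sum_univ_three, h9]
  have ht : (0 : ℝ) < 9 ^ m := by positivity
  generalize (9 : ℝ) ^ m = t at ht ⊢
  have hu : (0 : ℝ) < 15 ^ m := by positivity
  generalize (15 : ℝ) ^ m = u at hu ⊢
  simp only [Pi.smul_apply, smul_eq_mul, cons_val_zero, cons_val_one, cons_val_two, head_cons,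
    tail_cons]
  rw [show u⁻¹ * ((3 * t - 1) / 2) + u⁻¹ * 1 + u⁻¹ * 1 = u⁻¹ * (3 * (t + 1) / 2) by ring]
  refine ⟨?_, ?_, ?_⟩ <;> field_simp; ring

lemma tendsto_sum_sq_bwt_replicate_zero :
    Tendsto (fun m : ℕ => ∑ j, (bwt (List.replicate m 0) j - 1 / 3) ^ 2) atTop (𝓝 (1 / 6)) := by
  set δ : ℕ → ℝ := fun m => 1 / (3 * ((3 : ℝ) ^ (2 * m) + 1))
  have hδ : Tendsto δ atTop (𝓝 0) := by
    refine tendsto_const_nhds.div_atTop (Tendsto.const_mul_atTop three_pos ?_)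
    simp only [pow_mul]
    exact tendsto_atTop_add_const_right _ 1 (tendsto_pow_atTop_atTop_of_one_lt (by norm_num))
  have hsum : (fun m : ℕ => ∑ j, (bwt (List.replicate m 0) j - 1 / 3) ^ 2) =
      fun m => (1 / 3 - 2 * δ m) ^ 2 + 2 * (δ m - 1 / 6) ^ 2 := by
    funext m
    obtain ⟨h0, h1, h2⟩ := bwt_replicate_zero m
    simp only [Fin.sum_univ_three, h0, h1, h2, δ]
    ring
  have hlim : Tendsto (fun d : ℝ => (1 / 3 - 2 * d) ^ 2 + 2 * (d - 1 / 6) ^ 2) (𝓝 0) (𝓝 (1 / 6)) :=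
    (by fun_prop : Continuous _).tendsto' _ _ (by norm_num)
  rw [hsum]
  exact hlim.comp hδ

/-- For the word consisting of `m` copies of the letter `0`:
`b₀ = 2/3 - 2/(3(3^{2m}+1))`, `b₁ = b₂ = 1/6 + 1/(3(3^{2m}+1))`; consequently
`∑_j (b_j - 1/3)²` tends to `1/6` as `m → ∞`, and the supremum over all words of
`∑_j (b_j^(w) - 1/3)²` equals `1/6` and is not attained. -/
theorem stmt_16 :
    (∀ m : ℕ,
      bwt (List.replicate m 0) 0 = 2 / 3 - 2 / (3 * ((3 : ℝ) ^ (2 * m) + 1)) ∧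
      bwt (List.replicate m 0) 1 = 1 / 6 + 1 / (3 * ((3 : ℝ) ^ (2 * m) + 1)) ∧
      bwt (List.replicate m 0) 2 = 1 / 6 + 1 / (3 * ((3 : ℝ) ^ (2 * m) + 1))) ∧
    Filter.Tendsto
      (fun m : ℕ => ∑ j : Fin 3, (bwt (List.replicate m 0) j - 1 / 3) ^ 2)
      Filter.atTop (nhds (1 / 6)) ∧
    sSup {x : ℝ | ∃ w : List (Fin 3), ∑ j : Fin 3, (bwt w j - 1 / 3) ^ 2 = x}
      = 1 / 6 ∧
    (1 / 6 : ℝ) ∉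
      {x : ℝ | ∃ w : List (Fin 3), ∑ j : Fin 3, (bwt w j - 1 / 3) ^ 2 = x} := by
  have hlt : ∀ x ∈ {x : ℝ | ∃ w : List (Fin 3), ∑ j : Fin 3, (bwt w j - 1 / 3) ^ 2 = x},
      x < 1 / 6 := by
    rintro x ⟨w, rfl⟩
    exact sum_sq_bwt_sub_third_lt w
  have hbdd : BddAbove {x : ℝ | ∃ w : List (Fin 3), ∑ j : Fin 3, (bwt w j - 1 / 3) ^ 2 = x} :=
    ⟨1 / 6, fun x hx => (hlt x hx).le⟩
  refine ⟨bwt_replicate_zero, tendsto_sum_sq_bwt_replicate_zero, ?_, fun h => (hlt _ h).false⟩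
  refine le_antisymm (csSup_le ⟨_, [], rfl⟩ fun x hx => (hlt x hx).le) ?_
  exact le_of_tendsto' tendsto_sum_sq_bwt_replicate_zero fun m => le_csSup hbdd ⟨_, rfl⟩
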